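/- Let 0 < α < 1 and μ > 0, and define s(t) = E_α(−μ t^α) for t ≥ 0, where E_α = E_{α,1} is the Mittag-Leffler function. Then s satisfies the scalar Volterra equation s(t) + μ·(g_α ∗ s)(t) = 1 for all t ≥ 0; that is, s(t) + (μ/Γ(α)) ∫_0^t (t−τ)^{α−1} E_α(−μ τ^α) dτ = 1. -/

import Mathlib

/-!
Expanding `E_α(-μ τ^α) = ∑ₖ (-μ)^k g_{αk+1}(τ)` and convolving term by term with the
semigroup law `g_a ∗ g_b = g_{a+b}` (the Beta integral) gives
`μ (g_α ∗ s)(t) = μ t^α E_{α,α+1}(-μ t^α)`, and the recurrence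
`E_{α,1}(x) = 1 + x E_{α,α+1}(x)` turns this into `1 - s(t)`. The termwise integration is
legitimate because `Γ` outgrows every exponential, so all the series involved converge
absolutely.
-/

open MeasureTheory Set

/-- Laplace convolution on `(0, ∞)`: `(f ∗ g)(t) = ∫_0^t f(t−τ) g(τ) dτ`. -/
noncomputable def lconv (f g : ℝ → ℝ) (t : ℝ) : ℝ := ∫ τ in (0:ℝ)..t, f (t - τ) * g τ

/-- `g μ t = t^(μ-1)/Γ(μ)`. -/
noncomputable def g (μ t : ℝ) : ℝ := t ^ (μ - 1) / Real.Gamma μ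

/-- Two-parameter Mittag-Leffler function `E_{α,β}(x) = ∑_{k=0}^∞ x^k/Γ(α k + β)`. -/
noncomputable def mittagLeffler (α β x : ℝ) : ℝ := ∑' k : ℕ, x ^ k / Real.Gamma (α * k + β)

open Filter
open scoped Nat

theorem Real.rpow_sub_two_le_exp_mul_Gamma {R y : ℝ} (hR : 1 ≤ R) (hy : 2 ≤ y) :
    R ^ (y - 2) ≤ Real.exp R * Real.Gamma y := by
  set n := ⌊y - 1⌋₊
  have hn_le : (n : ℝ) ≤ y - 1 := Nat.floor_le (by linarith)
  have hn_gt : y - 1 < n + 1 := Nat.lt_floor_add_one _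
  have hn_one : (1 : ℝ) ≤ n := by exact_mod_cast Nat.le_floor (by push_cast; linarith)
  calc R ^ (y - 2) ≤ R ^ (n : ℝ) := Real.rpow_le_rpow_of_exponent_le hR (by linarith)
    _ = R ^ n := Real.rpow_natCast R n
    _ ≤ Real.exp R * n ! := by
      have := Real.pow_div_factorial_le_exp (x := R) (by linarith) n
      exact (div_le_iff₀ (by positivity)).1 this
    _ = Real.exp R * Real.Gamma (n + 1) := by rw [Real.Gamma_nat_eq_factorial]
    _ ≤ Real.exp R * Real.Gamma y := by
      gcongr
      exact Real.Gamma_strictMonoOn_Ici.monotoneOn (by simp; linarith) (by simpa using hy)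
        (by linarith)

theorem summable_mittagLeffler {α : ℝ} (hα : 0 < α) (β x : ℝ) :
    Summable fun k : ℕ => x ^ k / Real.Gamma (α * k + β) := by
  set R := (|x| + 1) ^ α⁻¹
  have hR : 1 ≤ R := Real.one_le_rpow (by linarith [abs_nonneg x]) (inv_nonneg.2 hα.le)
  have hRα : R ^ α = |x| + 1 := by
    rw [← Real.rpow_mul (by positivity), inv_mul_cancel₀ hα.ne', Real.rpow_one]
  -- `R ^ α = |x| + 1` makes the bound `R ^ (α k + β - 2) ≤ exp R * Γ (α k + β)` geometric
  have hq : |x| / (|x| + 1) < 1 := (div_lt_one (by positivity)).2 (lt_add_one _)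
  refine .of_norm_bounded_eventually_nat ((summable_geometric_of_lt_one (by positivity) hq).mul_left
    (Real.exp R / R ^ (β - 2))) ?_
  have hlarge : ∀ᶠ k : ℕ in atTop, 2 ≤ α * k + β :=
    ((tendsto_natCast_atTop_atTop.const_mul_atTop hα).atTop_add
      tendsto_const_nhds).eventually_ge_atTop 2
  filter_upwards [hlarge] with k hk
  have hΓ := Real.rpow_sub_two_le_exp_mul_Gamma hR hk
  have hsplit : R ^ (α * k + β - 2) = (|x| + 1) ^ k * R ^ (β - 2) := by
    rw [show α * k + β - 2 = α * k + (β - 2) by ring, Real.rpow_add (by positivity),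
      Real.rpow_mul (by positivity), hRα, Real.rpow_natCast]
  rw [hsplit] at hΓ
  have hΓpos : 0 < Real.Gamma (α * k + β) := Real.Gamma_pos_of_pos (by linarith)
  rw [norm_div, norm_pow, Real.norm_eq_abs, Real.norm_of_nonneg hΓpos.le, div_pow,
    div_le_iff₀ hΓpos]
  calc |x| ^ k = |x| ^ k / ((|x| + 1) ^ k * R ^ (β - 2)) * ((|x| + 1) ^ k * R ^ (β - 2)) := by
        field_simp
    _ ≤ |x| ^ k / ((|x| + 1) ^ k * R ^ (β - 2)) * (Real.exp R * Real.Gamma (α * k + β)) := by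
        gcongr
    _ = _ := by ring

theorem mittagLeffler_eq_inv_Gamma_add_mul {α : ℝ} (hα : 0 < α) (β x : ℝ) :
    mittagLeffler α β x = (Real.Gamma β)⁻¹ + x * mittagLeffler α (α + β) x := by
  rw [mittagLeffler, (summable_mittagLeffler hα β x).tsum_eq_zero_add, mittagLeffler,
    ← tsum_mul_left]
  congr 1
  · simp
  · refine tsum_congr fun k => ?_
    push_cast
    ring_nf

theorem integral_rpow_mul_sub_rpow {a b T : ℝ} (ha : 0 < a) (hb : 0 < b) (hT : 0 < T) :
    ∫ τ in (0 : ℝ)..T, τ ^ (a - 1) * (T - τ) ^ (b - 1) =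
      Real.Gamma a * Real.Gamma b / Real.Gamma (a + b) * T ^ (a + b - 1) := by
  apply Complex.ofReal_injective
  have hcpow := Complex.betaIntegral_scaled a b hT
  rw [Complex.betaIntegral_eq_Gamma_mul_div _ _ (by simpa) (by simpa)] at hcpow
  push_cast [← Complex.Gamma_ofReal, Complex.ofReal_cpow hT.le]
  rw [← intervalIntegral.integral_ofReal, mul_comm, ← hcpow]
  refine intervalIntegral.integral_congr fun τ hτ => ?_
  rw [uIcc_of_le hT.le] at hτ
  push_cast [Complex.ofReal_cpow hτ.1, Complex.ofReal_cpow (sub_nonneg.2 hτ.2)]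
  rfl

theorem g_nonneg {a t : ℝ} (ha : 0 < a) (ht : 0 ≤ t) : 0 ≤ g a t :=
  div_nonneg (Real.rpow_nonneg ht _) (Real.Gamma_pos_of_pos ha).le

theorem lconv_g_g {a b t : ℝ} (ha : 0 < a) (hb : 0 < b) (ht : 0 < t) :
    lconv (g a) (g b) t = g (a + b) t := by
  have hΓa := Real.Gamma_pos_of_pos ha
  have hΓb := Real.Gamma_pos_of_pos hb
  have hΓab := Real.Gamma_pos_of_pos (add_pos ha hb)
  calc lconv (g a) (g b) t
      = (Real.Gamma a * Real.Gamma b)⁻¹ *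
          ∫ τ in (0 : ℝ)..t, τ ^ (b - 1) * (t - τ) ^ (a - 1) := by
        rw [lconv, ← intervalIntegral.integral_const_mul]
        refine intervalIntegral.integral_congr fun τ _ => ?_
        simp only [g]
        field_simp
    _ = g (a + b) t := by
        rw [integral_rpow_mul_sub_rpow hb ha ht, add_comm b a, g]
        field_simp

theorem intervalIntegrable_g_sub_mul_g {a b t : ℝ} (ha : 0 < a) (hb : 0 < b) (ht : 0 < t) :
    IntervalIntegrable (fun τ => g a (t - τ) * g b τ) volume 0 t :=
  -- a non-integrable function has integral `0`, and this one integrates to `g (a + b) t > 0`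
  intervalIntegral.intervalIntegrable_of_integral_ne_zero <| by
    change lconv (g a) (g b) t ≠ 0
    rw [lconv_g_g ha hb ht]
    exact (div_pos (Real.rpow_pos_of_pos ht _) (Real.Gamma_pos_of_pos (add_pos ha hb))).ne'

theorem lconv_g_eq_tsum {a t : ℝ} (ha : 0 < a) (ht : 0 < t) {f : ℝ → ℝ} {b c : ℕ → ℝ}
    (hb : ∀ k, 0 < b k) (hf : ∀ τ ∈ Ioc 0 t, f τ = ∑' k, c k * g (b k) τ)
    (hsum : Summable fun k => |c k| * g (a + b k) t) :
    lconv (g a) f t = ∑' k, c k * g (a + b k) t := by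
  set F : ℕ → ℝ → ℝ := fun k τ => c k * (g a (t - τ) * g (b k) τ)
  have hG : ∀ k, ∫ τ in Ioc 0 t, g a (t - τ) * g (b k) τ = g (a + b k) t := fun k => by
    rw [← intervalIntegral.integral_of_le ht.le, ← lconv, lconv_g_g ha (hb k) ht]
  have hF_int : ∀ k, IntegrableOn (F k) (Ioc 0 t) := fun k =>
    ((intervalIntegrable_iff_integrableOn_Ioc_of_le ht.le).1
      (intervalIntegrable_g_sub_mul_g ha (hb k) ht)).const_mul (c k)
  have hF_norm : ∀ k, ∫ τ in Ioc 0 t, ‖F k τ‖ = |c k| * g (a + b k) t := fun k => by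
    rw [← hG, ← integral_const_mul]
    refine setIntegral_congr_fun measurableSet_Ioc fun τ hτ => ?_
    rw [Real.norm_eq_abs, abs_mul, abs_of_nonneg (mul_nonneg (g_nonneg ha (by linarith [hτ.2]))
      (g_nonneg (hb k) hτ.1.le))]
  calc lconv (g a) f t = ∫ τ in Ioc 0 t, ∑' k, F k τ := by
        rw [lconv, intervalIntegral.integral_of_le ht.le]
        refine setIntegral_congr_fun measurableSet_Ioc fun τ hτ => ?_
        simp only [hf τ hτ, F, ← tsum_mul_left]
        congr 1 with k
        ring
    _ = ∑' k, ∫ τ in Ioc 0 t, F k τ :=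
        (integral_tsum_of_summable_integral_norm hF_int (by simpa only [hF_norm] using hsum)).symm
    _ = ∑' k, c k * g (a + b k) t := by simp only [F, integral_const_mul, hG]

theorem pow_mul_g_eq {α β c τ : ℝ} (hτ : 0 < τ) (k : ℕ) :
    c ^ k * g (α * k + β) τ =
      τ ^ (β - 1) * ((c * τ ^ α) ^ k / Real.Gamma (α * k + β)) := by
  rw [g, mul_pow, ← Real.rpow_mul_natCast hτ.le,
    show α * k + β - 1 = α * k + (β - 1) by ring, Real.rpow_add hτ]
  ring

theorem summable_pow_mul_g {α τ : ℝ} (hα : 0 < α) (hτ : 0 < τ) (c β : ℝ) :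
    Summable fun k : ℕ => c ^ k * g (α * k + β) τ := by
  simp_rw [pow_mul_g_eq hτ]
  exact (summable_mittagLeffler hα β _).mul_left _

theorem rpow_mul_mittagLeffler_eq_tsum {α τ : ℝ} (hτ : 0 < τ) (c β : ℝ) :
    τ ^ (β - 1) * mittagLeffler α β (c * τ ^ α) =
      ∑' k : ℕ, c ^ k * g (α * k + β) τ := by
  simp_rw [pow_mul_g_eq hτ, tsum_mul_left]
  rfl

theorem lconv_g_rpow_mul_mittagLeffler {α β t : ℝ} (hα : 0 < α) (hβ : 0 < β) (ht : 0 < t)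
    (c : ℝ) :
    lconv (g α) (fun τ => τ ^ (β - 1) * mittagLeffler α β (c * τ ^ α)) t =
      t ^ (α + β - 1) * mittagLeffler α (α + β) (c * t ^ α) := by
  have hshift : ∀ k : ℕ, α + (α * k + β) = α * k + (α + β) := fun k => by ring
  rw [rpow_mul_mittagLeffler_eq_tsum ht, lconv_g_eq_tsum hα ht (b := fun k => α * k + β)
    (c := fun k => c ^ k) (fun k => by positivity)
    (fun τ hτ => rpow_mul_mittagLeffler_eq_tsum hτ.1 c β)]
  · simp only [hshift]
  · simpa only [abs_pow, hshift] using summable_pow_mul_g hα ht |c| (α + β)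

theorem stmt_13_general (α μ : ℝ) (hα : 0 < α)
    (s : ℝ → ℝ) (hs : ∀ t : ℝ, s t = mittagLeffler α 1 (-(μ * t ^ α))) :
    (∀ t : ℝ, 0 ≤ t → s t + μ * lconv (g α) s t = 1) ∧
    (∀ t : ℝ, 0 ≤ t →
      s t + (μ / Real.Gamma α)
          * ∫ τ in (0:ℝ)..t, (t - τ) ^ (α - 1) * mittagLeffler α 1 (-(μ * τ ^ α)) = 1) := by
  have hs_eq : s = fun τ => τ ^ ((1 : ℝ) - 1) * mittagLeffler α 1 (-μ * τ ^ α) := by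
    funext τ
    simp [hs]
  have hvolterra : ∀ t : ℝ, 0 ≤ t → s t + μ * lconv (g α) s t = 1 := by
    intro t ht
    rcases ht.eq_or_lt with rfl | ht
    · simp [lconv, hs, Real.zero_rpow hα.ne', mittagLeffler_eq_inv_Gamma_add_mul hα 1 0]
    · have hconv := lconv_g_rpow_mul_mittagLeffler hα one_pos ht (-μ)
      rw [← hs_eq, add_sub_cancel_right, neg_mul] at hconv
      rw [hconv, hs t, mittagLeffler_eq_inv_Gamma_add_mul hα 1, Real.Gamma_one]
      ring
  refine ⟨hvolterra, fun t ht => ?_⟩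
  have hlconv : μ * lconv (g α) s t = μ / Real.Gamma α *
      ∫ τ in (0:ℝ)..t, (t - τ) ^ (α - 1) * mittagLeffler α 1 (-(μ * τ ^ α)) := by
    rw [lconv, div_eq_mul_inv, mul_assoc,
      ← intervalIntegral.integral_const_mul (Real.Gamma α)⁻¹]
    congr 1
    refine intervalIntegral.integral_congr fun τ _ => ?_
    rw [g, hs]
    ring
  rw [← hlconv]
  exact hvolterra t ht

theorem stmt_13 (α μ : ℝ) (hα : 0 < α) (hα1 : α < 1) (hμ : 0 < μ)
    (s : ℝ → ℝ) (hs : ∀ t : ℝ, s t = mittagLeffler α 1 (-(μ * t ^ α))) :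
    (∀ t : ℝ, 0 ≤ t → s t + μ * lconv (g α) s t = 1) ∧
    (∀ t : ℝ, 0 ≤ t →
      s t + (μ / Real.Gamma α)
          * ∫ τ in (0:ℝ)..t, (t - τ) ^ (α - 1) * mittagLeffler α 1 (-(μ * τ ^ α)) = 1) :=
  stmt_13_general α μ hα s hs
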